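/- arXiv:2202.11617 — 4 statements merged into one kernel-verified Lean document; each statement's English description precedes it below -/
import Mathlib

section
/- Let A_1, ..., A_k be n×n real matrices and let 1 ≤ r < k. Suppose there are scalars t_1, ..., t_k ∈ ℝ such that the matrix ∑_{i=1}^k t_i A_i has rank at least r. Then there is a subset I ⊆ {1, ..., k} with |I| ≤ r and scalars t'_i (i ∈ I) such that ∑_{i ∈ I} t'_i A_i has rank at least r. -/
/-!
Compress `M = ∑ tᵢ Aᵢ` to an invertible `r × r` matrix `B M C = 1`. Then
`p(s) = det (∑ sᵢ B Aᵢ C)` is a homogeneous polynomial of degree `r` with `p(t) ≠ 0`, so it has a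
nonzero monomial, which involves at most `r` variables. Setting all other variables to zero leaves
a nonzero polynomial, hence one that does not vanish at some point `t'` of an infinite field; at
`t'` the combination of the `Aᵢ` with `i` among those variables has rank at least `r`.
-/

open MvPolynomial

theorem Finsupp.card_support_le_degree {σ : Type*} (d : σ →₀ ℕ) : d.support.card ≤ d.degree := by
  simpa [degree_apply] using Finset.card_nsmul_le_sum d.support d 1 fun i hi =>
    Nat.one_le_iff_ne_zero.mpr (Finsupp.mem_support_iff.mp hi)

namespace MvPolynomial

theorem exists_eval_ne_zero_of_coeff_ne_zero {R σ : Type*} [CommRing R] [IsDomain R] [Infinite R]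
    {P : MvPolynomial σ R} {d : σ →₀ ℕ} (hd : P.coeff d ≠ 0) :
    ∃ t : σ → R, (∀ i ∉ d.support, t i = 0) ∧ eval t P ≠ 0 := by
  classical
  have hι : Function.Injective (Subtype.val : d.support → σ) := Subtype.val_injective
  have hQ : killCompl hι P ≠ 0 := by
    intro h0
    apply hd
    rw [← Finsupp.mapDomain_comapDomain _ hι d fun i hi => ⟨⟨i, hi⟩, rfl⟩, ← coeff_killCompl hι,
      h0, coeff_zero]
  obtain ⟨s, hs⟩ : ∃ s, eval s (killCompl hι P) ≠ 0 := by
    by_contra! h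
    exact hQ (MvPolynomial.funext fun s => by simp [h s])
  refine ⟨fun i => if hi : i ∈ d.support then s ⟨i, hi⟩ else 0, fun i hi => dif_neg hi, ?_⟩
  have hcomp : (aeval (R := R) s).comp (killCompl hι) =
      aeval fun i => if hi : i ∈ d.support then s ⟨i, hi⟩ else 0 := by
    ext i
    by_cases hi : d i = 0
    · simp [killCompl, hi]
    · simp [killCompl, hi]
      exact congrArg s ((Equiv.ofInjective _ hι).symm_apply_apply ⟨i, _⟩)
  rwa [← coe_aeval_eq_eval, ← hcomp]

end MvPolynomial

namespace Matrix

variable {R σ : Type*} [CommRing R]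

theorem isHomogeneous_det {n : Type*} [Fintype n] [DecidableEq n]
    {M : Matrix n n (MvPolynomial σ R)} (hM : ∀ a b, (M a b).IsHomogeneous 1) :
    M.det.IsHomogeneous (Fintype.card n) := by
  rw [det_apply]
  refine IsHomogeneous.sum _ _ _ fun π _ => ?_
  have hprod : (∏ i, M (π i) i).IsHomogeneous (Fintype.card n) := by
    simpa using IsHomogeneous.prod Finset.univ _ (fun _ => 1) fun i _ => hM (π i) i
  rcases Int.units_eq_one_or (Equiv.Perm.sign π) with h | h <;> simp [h, hprod, hprod.neg]

noncomputable def pencil {n : Type*} [Fintype σ] (D : σ → Matrix n n R) :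
    Matrix n n (MvPolynomial σ R) :=
  of fun a b => ∑ i, C (D i a b) * X i

theorem isHomogeneous_pencil_apply {n : Type*} [Fintype σ] (D : σ → Matrix n n R) (a b : n) :
    (pencil D a b).IsHomogeneous 1 :=
  IsHomogeneous.sum _ _ _ fun i _ => isHomogeneous_C_mul_X (D i a b) i

theorem eval_det_pencil {n : Type*} [Fintype n] [DecidableEq n] [Fintype σ]
    (D : σ → Matrix n n R) (t : σ → R) :
    eval t (pencil D).det = (∑ i, t i • D i).det := by
  rw [RingHom.map_det]
  congr 1
  ext a b
  simp [pencil, sum_apply, mul_comm]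

theorem exists_card_le_det_sum_smul_ne_zero {K ι n : Type*} [Field K] [Infinite K] [Fintype ι]
    [Fintype n] [DecidableEq n] (D : ι → Matrix n n K) (t : ι → K)
    (ht : (∑ i, t i • D i).det ≠ 0) :
    ∃ (I : Finset ι) (t' : ι → K), I.card ≤ Fintype.card n ∧ (∑ i ∈ I, t' i • D i).det ≠ 0 := by
  have hP : (pencil D).det.IsHomogeneous (Fintype.card n) :=
    isHomogeneous_det (isHomogeneous_pencil_apply D)
  have hP0 : (pencil D).det ≠ 0 := fun h0 => ht (by rw [← eval_det_pencil, h0, map_zero])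
  obtain ⟨d, hd⟩ := exists_coeff_ne_zero hP0
  have hdeg : d.degree = Fintype.card n := by
    rw [Finsupp.degree_eq_weight_one]
    exact hP hd
  obtain ⟨t', ht'0, ht'⟩ := exists_eval_ne_zero_of_coeff_ne_zero hd
  refine ⟨d.support, t', hdeg ▸ d.card_support_le_degree, ?_⟩
  rwa [Finset.sum_subset d.support.subset_univ fun i _ hi => by rw [ht'0 i hi, zero_smul],
    ← eval_det_pencil]

theorem exists_mul_mul_eq_one_of_le_rank {K m n : Type*} [Field K] [Fintype m] [Fintype n]
    {r : ℕ} (M : Matrix m n K) (h : r ≤ M.rank) :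
    ∃ (B : Matrix (Fin r) m K) (C : Matrix n (Fin r) K), B * M * C = 1 := by
  classical
  obtain ⟨w, hw⟩ := exists_linearIndependent_of_le_finrank h
  choose x hx using fun j => (w j).2
  set C := Fintype.linearCombination K x
  have hMC : M.mulVecLin ∘ₗ C = Fintype.linearCombination K (fun j => (w j : m → K)) :=
    LinearMap.ext fun v => by simp [C, Fintype.linearCombination_apply, hx]
  have hinj : LinearMap.ker (M.mulVecLin ∘ₗ C) = ⊥ := by
    rw [hMC, LinearMap.ker_eq_bot, ← linearIndependent_iff_injective_fintypeLinearCombination]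
    exact hw.map' _ (Submodule.ker_subtype _)
  obtain ⟨B, hB⟩ := (M.mulVecLin ∘ₗ C).exists_leftInverse_of_injective hinj
  refine ⟨LinearMap.toMatrix' B, LinearMap.toMatrix' C, toLin'.injective ?_⟩
  rw [toLin'_mul, toLin'_mul, toLin'_toMatrix', toLin'_toMatrix', toLin'_one, ← hB]
  rfl

theorem le_rank_of_isUnit_mul_mul {K m n : Type*} [Field K] [Fintype m] [Fintype n] {r : ℕ}
    (B : Matrix (Fin r) m K) (M : Matrix m n K) (C : Matrix n (Fin r) K)
    (h : IsUnit (B * M * C)) : r ≤ M.rank :=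
  calc r = (B * M * C).rank := by rw [rank_of_isUnit _ h, Fintype.card_fin]
    _ ≤ (B * M).rank := rank_mul_le_left _ _
    _ ≤ M.rank := rank_mul_le_right _ _

end Matrix

theorem stmt0_general {n k r : ℕ} (A : Fin k → Matrix (Fin n) (Fin n) ℝ)
    (t : Fin k → ℝ)
    (h : r ≤ (∑ i, t i • A i).rank) :
    ∃ (I : Finset (Fin k)) (t' : Fin k → ℝ),
      I.card ≤ r ∧ r ≤ (∑ i ∈ I, t' i • A i).rank := by
  obtain ⟨B, C, hBC⟩ := Matrix.exists_mul_mul_eq_one_of_le_rank _ h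
  have hcompress (I : Finset (Fin k)) (s : Fin k → ℝ) :
      B * (∑ i ∈ I, s i • A i) * C = ∑ i ∈ I, s i • (B * A i * C) := by
    simp [Matrix.mul_sum, Matrix.sum_mul]
  obtain ⟨I, t', hI, hdet⟩ := Matrix.exists_card_le_det_sum_smul_ne_zero (fun i => B * A i * C) t
    (by rw [← hcompress, hBC, Matrix.det_one]; exact one_ne_zero)
  refine ⟨I, t', by simpa using hI, Matrix.le_rank_of_isUnit_mul_mul B _ C ?_⟩
  rw [Matrix.isUnit_iff_isUnit_det, hcompress]
  exact hdet.isUnit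

/-- If some linear combination of `A 1, …, A k` has rank at least `r < k`,
then some linear combination of at most `r` of the matrices has rank at least `r`. -/
theorem stmt0 {n k r : ℕ} (A : Fin k → Matrix (Fin n) (Fin n) ℝ)
    (hr : 1 ≤ r) (hrk : r < k) (t : Fin k → ℝ)
    (h : r ≤ (∑ i, t i • A i).rank) :
    ∃ (I : Finset (Fin k)) (t' : Fin k → ℝ),
      I.card ≤ r ∧ r ≤ (∑ i ∈ I, t' i • A i).rank :=
  stmt0_general A t h
end

section
/- Let A_1, ..., A_k be k×k real matrices and suppose there are scalars t_1, ..., t_k ∈ ℝ such that ∑_{i=1}^k t_i A_i is nonsingular. Then either there is a proper subset I ⊊ {1, ..., k} and scalars t'_i (i ∈ I) such that ∑_{i ∈ I} t'_i A_i is nonsingular, or the polynomial det(∑_{i=1}^k x_i A_i) ∈ ℝ[x_1, ..., x_k] equals α·x_1·x_2···x_k for some α ∈ ℝ. -/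
/-!
If no combination of a proper subfamily of the `Aᵢ` is nonsingular, then `P = det (∑ xᵢ Aᵢ)`
vanishes on every coordinate hyperplane `xⱼ = 0`, because there the sum omits `Aⱼ`. Over an
infinite field this makes every `xⱼ` divide `P`, hence so does `x₁ ⋯ x_k`; as `P` has total
degree at most `k`, the cofactor is a constant.
-/

namespace MvPolynomial

variable {σ R ι n : Type*}

theorem notMem_vars_modMonomial_single [CommSemiring R] (p : MvPolynomial σ R) (j : σ) :
    j ∉ (p.modMonomial (Finsupp.single j 1)).vars := by
  rw [mem_vars_iff_mem_support]
  rintro ⟨m, hm, hjm⟩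
  refine mem_support_iff.mp hm (coeff_modMonomial_of_le p ?_)
  rwa [Finsupp.single_le_iff, Nat.one_le_iff_ne_zero, ← Finsupp.mem_support_iff]

theorem X_dvd_of_eval_eq_zero [CommRing R] [IsDomain R] [Infinite R] {p : MvPolynomial σ R}
    {j : σ} (hp : ∀ x : σ → R, x j = 0 → eval x p = 0) : X j ∣ p := by
  classical
  rw [X_dvd_iff_modMonomial_eq_zero]
  set r := p.modMonomial (Finsupp.single j 1)
  refine MvPolynomial.funext fun x => ?_
  -- `r` does not involve `xⱼ`, so it may be evaluated on the hyperplane `xⱼ = 0`.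
  have hr : eval x r = eval (Function.update x j 0) r :=
    eval₂Hom_congr' rfl (fun i hi _ => (Function.update_of_ne
      (ne_of_mem_of_not_mem hi (notMem_vars_modMonomial_single p j)) 0 x).symm) rfl
  have hdecomp := congrArg (eval (Function.update x j 0)) (divMonomial_add_modMonomial_single p j)
  rw [map_add, map_mul, eval_X, Function.update_self, zero_mul, zero_add,
    hp _ (Function.update_self j 0 x)] at hdecomp
  rw [hr, hdecomp, map_zero]

theorem prod_X_dvd_of_eval_eq_zero [Fintype σ] {K : Type*} [Field K] [Infinite K]
    {p : MvPolynomial σ K} (hp : ∀ (x : σ → K) (j : σ), x j = 0 → eval x p = 0) :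
    ∏ j, X j ∣ p := by
  refine Fintype.prod_dvd_of_isRelPrime (fun i j hij => ?_) fun j => X_dvd_of_eval_eq_zero (hp · j)
  exact X_prime.irreducible.isRelPrime_iff_not_dvd.mpr (X_dvd_X.not.mpr hij)

theorem totalDegree_prod_X [Fintype σ] [CommRing R] [IsDomain R] :
    (∏ j, X j : MvPolynomial σ R).totalDegree = Fintype.card σ := by
  have h := IsHomogeneous.prod Finset.univ (X : σ → MvPolynomial σ R) (fun _ => 1)
    fun j _ => isHomogeneous_X R j
  simpa using h.totalDegree (Finset.prod_ne_zero_iff.mpr fun j _ => X_ne_zero j)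

theorem exists_eq_C_mul_prod_X_of_prod_X_dvd [Fintype σ] [CommRing R] [IsDomain R]
    {p : MvPolynomial σ R} (hdvd : ∏ j, X j ∣ p) (hdeg : p.totalDegree ≤ Fintype.card σ) :
    ∃ α, p = C α * ∏ j, X j := by
  obtain ⟨q, rfl⟩ := hdvd
  by_cases hq : q = 0
  · exact ⟨0, by simp [hq]⟩
  have hprod : (∏ j, X j : MvPolynomial σ R) ≠ 0 :=
    Finset.prod_ne_zero_iff.mpr fun j _ => X_ne_zero j
  rw [totalDegree_mul_of_isDomain hprod hq, totalDegree_prod_X] at hdeg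
  have hq0 : q.totalDegree = 0 := by omega
  exact ⟨q.coeff 0, by rw [mul_comm, ← totalDegree_eq_zero_iff_eq_C.mp hq0]⟩

theorem totalDegree_det_le [Fintype n] [DecidableEq n] [CommRing R]
    (M : Matrix n n (MvPolynomial σ R)) (hM : ∀ a b, (M a b).totalDegree ≤ 1) :
    M.det.totalDegree ≤ Fintype.card n := by
  rw [Matrix.det_apply]
  refine (totalDegree_finsetSum _ _).trans (Finset.sup_le fun π _ => ?_)
  refine (totalDegree_smul_le _ _).trans ((totalDegree_finsetProd _ _).trans ?_)
  simpa using Finset.sum_le_card_nsmul Finset.univ _ 1 fun i _ => hM (π i) i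

theorem totalDegree_sum_X_mul_C_le [Fintype ι] [CommRing R] (c : ι → R) : (∑ i, X i * C (c i)).totalDegree ≤ 1 :=
  (IsHomogeneous.sum _ _ 1 fun i _ => by
    simpa using (isHomogeneous_X R i).mul (isHomogeneous_C ι (c i))).totalDegree_le

theorem eval_det_sum_X_mul_C [Fintype ι] [Fintype n] [DecidableEq n] [CommRing R] (A : ι → Matrix n n R) (x : ι → R) :
    eval x (Matrix.of fun a b => ∑ i, X i * C (A i a b)).det = (∑ i, x i • A i).det := by
  rw [RingHom.map_det]
  congr 1
  ext a b
  simp [Matrix.sum_apply, mul_comm]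

end MvPolynomial

open MvPolynomial in
theorem stmt1_general {k : ℕ} (A : Fin k → Matrix (Fin k) (Fin k) ℝ) :
    (∃ (I : Finset (Fin k)) (t' : Fin k → ℝ),
        I ⊂ Finset.univ ∧ (∑ i ∈ I, t' i • A i).det ≠ 0) ∨
      ∃ α : ℝ,
        (Matrix.of fun a b => ∑ i, X i * C (A i a b) :
            Matrix (Fin k) (Fin k) (MvPolynomial (Fin k) ℝ)).det
          = C α * ∏ i, X i := by
  refine or_iff_not_imp_left.mpr fun hsub => ?_
  push Not at hsub
  refine exists_eq_C_mul_prod_X_of_prod_X_dvd (prod_X_dvd_of_eval_eq_zero fun x j hj => ?_) ?_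
  · rw [eval_det_sum_X_mul_C, ← Finset.add_sum_erase _ _ (Finset.mem_univ j), hj, zero_smul,
      zero_add]
    exact hsub _ x (Finset.erase_ssubset (Finset.mem_univ j))
  · exact totalDegree_det_le _ fun a b => totalDegree_sum_X_mul_C_le fun i => A i a b

open MvPolynomial in
/-- If some linear combination of the `k × k` matrices `A 1, …, A k` is
nonsingular, then either a linear combination of a proper subset of them is nonsingular,
or `det (∑ xᵢ Aᵢ)` is the monomial `α · x₁ ⋯ x_k`. -/
theorem stmt1 {k : ℕ} (A : Fin k → Matrix (Fin k) (Fin k) ℝ) (t : Fin k → ℝ)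
    (h : (∑ i, t i • A i).det ≠ 0) :
    (∃ (I : Finset (Fin k)) (t' : Fin k → ℝ),
        I ⊂ Finset.univ ∧ (∑ i ∈ I, t' i • A i).det ≠ 0) ∨
      ∃ α : ℝ,
        (Matrix.of fun a b => ∑ i, X i * C (A i a b) :
            Matrix (Fin k) (Fin k) (MvPolynomial (Fin k) ℝ)).det
          = C α * ∏ i, X i :=
  stmt1_general A
end

section
/- Let G = (V, E) be a graph realized in ℝ^d by a map p : V → ℝ^d, let ω : E → ℝ be an equilibrium stress of (G, p), and let Ω be the associated stress matrix. If rank(Ω) = 1, then the support of ω (the set of edges e with ω(e) ≠ 0) induces a complete subgraph of G. -/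
/-!
A matrix of rank one is `x yᵀ`, so its nonzero entries form a rectangle `supp x × supp y`.
The stress matrix is symmetric and its off-diagonal entries are `-ω`, so if `u` lies on an edge of
the support then `x u ≠ 0`, and if `w` does then, by symmetry, `y w ≠ 0`; hence `ω u w ≠ 0`.
-/

namespace Matrix

variable {m n K : Type*} [Fintype m] [Fintype n] [Field K]

theorem exists_col_eq_smul_of_rank_le_one {A : Matrix m n K} (hA : A.rank ≤ 1) :
    ∃ y : m → K, ∀ j, ∃ c : K, A.col j = c • y := by
  rw [rank_eq_finrank_span_cols, finrank_le_one_iff] at hA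
  obtain ⟨y, hy⟩ := hA
  refine ⟨y, fun j => ?_⟩
  obtain ⟨c, hc⟩ := hy ⟨A.col j, Submodule.subset_span ⟨j, rfl⟩⟩
  exact ⟨c, congrArg Subtype.val hc.symm⟩

theorem apply_ne_zero_of_rank_le_one {A : Matrix m n K} (hA : A.rank ≤ 1) {i k : m} {j l : n}
    (hij : A i j ≠ 0) (hkl : A k l ≠ 0) : A i l ≠ 0 := by
  obtain ⟨y, hy⟩ := exists_col_eq_smul_of_rank_le_one hA
  obtain ⟨cj, hj⟩ := hy j
  obtain ⟨cl, hl⟩ := hy l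
  have hAij : A i j = cj * y i := congrFun hj i
  have hAkl : A k l = cl * y k := congrFun hl k
  have hAil : A i l = cl * y i := congrFun hl i
  rw [hAil]
  exact mul_ne_zero (left_ne_zero_of_mul (hAkl ▸ hkl)) (right_ne_zero_of_mul (hAij ▸ hij))

theorem IsSymm.apply_ne_zero_of_rank_le_one {A : Matrix n n K} (hsymm : A.IsSymm)
    (hA : A.rank ≤ 1) {i j k l : n} (hij : A i j ≠ 0) (hkl : A k l ≠ 0) : A i k ≠ 0 :=
  Matrix.apply_ne_zero_of_rank_le_one hA hij (hsymm.apply k l ▸ hkl)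

end Matrix

section StressMatrix

variable {V R : Type*} [Fintype V] [DecidableEq V] [AddCommGroup R]

def stressMatrix (ω : V → V → R) : Matrix V V R :=
  Matrix.of fun u v => if u = v then ∑ w, ω u w else -ω u v

theorem stressMatrix_apply_ne_zero_iff {ω : V → V → R} {u v : V} (huv : u ≠ v) :
    stressMatrix ω u v ≠ 0 ↔ ω u v ≠ 0 := by
  simp [stressMatrix, huv]

theorem stressMatrix_isSymm {ω : V → V → R} (hsym : ∀ u v, ω u v = ω v u) :
    (stressMatrix ω).IsSymm := by
  refine Matrix.IsSymm.ext fun u v => ?_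
  by_cases huv : u = v
  · rw [huv]
  · simp [stressMatrix, huv, Ne.symm huv, hsym]

end StressMatrix

theorem stmt5_general {V : Type*} [Fintype V] [DecidableEq V]
    (G : SimpleGraph V) (ω : V → V → ℝ)
    (hsym : ∀ u v, ω u v = ω v u)
    (hsupp : ∀ u v, ¬ G.Adj u v → ω u v = 0)
    (hrank : (Matrix.of fun u v : V =>
        if u = v then ∑ w, ω u w else -ω u v).rank = 1) :
    ∀ u v w x : V, ω u v ≠ 0 → ω w x ≠ 0 → u ≠ w →
      G.Adj u w ∧ ω u w ≠ 0 := by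
  intro u v w x huv hwx huw
  have hne : ∀ {a b : V}, ω a b ≠ 0 → a ≠ b := by
    rintro a _ hab rfl
    exact hab (hsupp a a G.irrefl)
  have hωuw : ω u w ≠ 0 := by
    rw [← stressMatrix_apply_ne_zero_iff huw]
    exact (stressMatrix_isSymm hsym).apply_ne_zero_of_rank_le_one hrank.le
      ((stressMatrix_apply_ne_zero_iff (hne huv)).2 huv)
      ((stressMatrix_apply_ne_zero_iff (hne hwx)).2 hwx)
  exact ⟨not_not.1 fun hadj => hωuw (hsupp u w hadj), hωuw⟩

/-- If a framework `(G, p)` in `ℝ^d` has an equilibrium stress `ω` whose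
associated stress matrix has rank `1`, then the support of `ω` induces a complete
subgraph of `G`: any two distinct vertices incident to edges of the support are
joined by an edge of the support. -/
theorem stmt5 {V : Type*} [Fintype V] [DecidableEq V] (d : ℕ)
    (G : SimpleGraph V) (p : V → Fin d → ℝ) (ω : V → V → ℝ)
    (hsym : ∀ u v, ω u v = ω v u)
    (hsupp : ∀ u v, ¬ G.Adj u v → ω u v = 0)
    (hstress : ∀ u, ∀ i : Fin d, ∑ v, ω u v * (p u i - p v i) = 0)
    (hrank : (Matrix.of fun u v : V =>
        if u = v then ∑ w, ω u w else -ω u v).rank = 1) :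
    ∀ u v w x : V, ω u v ≠ 0 → ω w x ≠ 0 → u ≠ w →
      G.Adj u w ∧ ω u w ≠ 0 :=
  stmt5_general G ω hsym hsupp hrank
end

section
/- Define grn(G) as the largest d such that G has a globally rigid subgraph in ℝ^d on at least d+2 vertices (or 0 if none exists). Assume that every d(d+1)-connected graph is rigid in ℝ^d (the Lovász–Yemini conjecture) and that every (d(d+1)+1)-connected graph is globally rigid in ℝ^d. Then for every graph G = (V, E), grn(G) ≥ ⌊√(|E| / (6|V|))⌋. -/
/-- Squared Euclidean distance between two points of `ℝ^d`. -/
def sqDist {d : ℕ} (x y : Fin d → ℝ) : ℝ := ∑ i, (x i - y i) ^ 2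

/-- Two realizations of `G` in `ℝ^d` are equivalent if corresponding edge lengths agree. -/
def FrameworkEquiv {V : Type*} (d : ℕ) (G : SimpleGraph V) (p q : V → Fin d → ℝ) : Prop :=
  ∀ u v : V, G.Adj u v → sqDist (p u) (p v) = sqDist (q u) (q v)

/-- Two realizations are congruent if all pairwise distances agree. -/
def FrameworkCongr {V : Type*} (d : ℕ) (p q : V → Fin d → ℝ) : Prop :=
  ∀ u v : V, sqDist (p u) (p v) = sqDist (q u) (q v)

/-- A realization is generic if the set of all coordinates of its points is
algebraically independent over `ℚ`. -/
def Generic {V : Type*} (d : ℕ) (p : V → Fin d → ℝ) : Prop :=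
  AlgebraicIndependent ℚ (fun vi : V × Fin d => p vi.1 vi.2)

/-- A graph is globally rigid in `ℝ^d` if every generic realization in `ℝ^d` is
determined up to congruence by its edge lengths. -/
def GloballyRigid {V : Type*} (d : ℕ) (G : SimpleGraph V) : Prop :=
  ∀ p : V → Fin d → ℝ, Generic d p →
    ∀ q : V → Fin d → ℝ, FrameworkEquiv d G p q → FrameworkCongr d p q

/-- A graph is minimally globally rigid in `ℝ^d` if it is globally rigid in `ℝ^d`
but deleting any edge destroys global rigidity. -/
def MinimallyGloballyRigid {V : Type*} (d : ℕ) (G : SimpleGraph V) : Prop :=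
  GloballyRigid d G ∧
    ∀ e ∈ G.edgeSet, ¬ GloballyRigid d (G.deleteEdges {e})

/-- A graph is `k`-connected if it has more than `k` vertices and remains connected
after deleting any set of fewer than `k` vertices. -/
def KConnected {V : Type*} (k : ℕ) (G : SimpleGraph V) : Prop :=
  k + 1 ≤ Nat.card V ∧
    ∀ S : Set V, S.ncard < k → (G.induce Sᶜ).Connected

/-- A graph is rigid in `ℝ^d` if every generic realization is locally determined up to
congruence by its edge lengths. -/
def Rigid {V : Type*} (d : ℕ) (G : SimpleGraph V) : Prop :=
  ∀ p : V → Fin d → ℝ, Generic d p →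
    ∃ ε > (0 : ℝ), ∀ q : V → Fin d → ℝ, FrameworkEquiv d G p q →
      (∀ v : V, sqDist (p v) (q v) < ε) → FrameworkCongr d p q

/-- `grn G` is the largest `d` such that `G` has a globally rigid subgraph in `ℝ^d`
on at least `d + 2` vertices (and `0` if there is no such `d`). -/
noncomputable def grn {V : Type} (G : SimpleGraph V) : ℕ :=
  sSup {d : ℕ | ∃ (U : Set V) (H : SimpleGraph U),
    H ≤ G.induce U ∧ d + 2 ≤ U.ncard ∧ GloballyRigid d H}

/-!
A graph with `|E| ≥ 6d²|V|` contains a `(d(d+1)+1)`-connected subgraph, which is globally rigid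
in `ℝ^d` by assumption and has at least `d(d+1) + 2 ≥ d + 2` vertices.

The connected subgraph comes from Mader's theorem: a graph on at least `2k` vertices with more
than `2k(|V| - k)` edges has a `(k+1)`-connected subgraph. Induct on `|V|`. A vertex of degree
at most `2k` can be deleted without losing the edge bound. Otherwise, if the graph is not
`(k+1)`-connected, a separator of at most `k` vertices splits it into two sides `s₁, s₂` with
`|s₁| + |s₂| ≤ |V| + k`, each of size at least `2k` because the minimum degree exceeds `2k`; if
neither side satisfied the edge bound, adding the two bounds would contradict it for `V`.
-/

open Finset

namespace SimpleGraph

variable {V : Type*} (G : SimpleGraph V)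

theorem card_interedges_univ [Fintype V] [DecidableRel G.Adj] :
    #(G.interedges univ univ) = 2 * #G.edgeFinset := by
  rw [← G.dart_card_eq_twice_card_edges, ← card_univ,
    ← card_map ⟨Dart.toProd, Dart.toProd_injective⟩]
  congr 1
  ext ⟨x, y⟩
  simp only [mem_map, mem_univ, true_and, mem_interedges_iff]
  exact ⟨fun h => ⟨⟨(x, y), h⟩, rfl⟩, fun ⟨⟨_, h⟩, hd⟩ => by cases hd; exact h⟩

variable [DecidableEq V]

structure IsSeparation (t s₁ s₂ : Finset V) : Prop where
  union_eq : s₁ ∪ s₂ = t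
  left_nonempty : (s₁ \ s₂).Nonempty
  right_nonempty : (s₂ \ s₁).Nonempty
  not_adj : ∀ x ∈ s₁ \ s₂, ∀ y ∈ s₂ \ s₁, ¬ G.Adj x y

namespace IsSeparation

variable {G} {t s₁ s₂ : Finset V}

theorem symm (h : G.IsSeparation t s₁ s₂) : G.IsSeparation t s₂ s₁ where
  union_eq := union_comm s₁ s₂ ▸ h.union_eq
  left_nonempty := h.right_nonempty
  right_nonempty := h.left_nonempty
  not_adj x hx y hy hxy := h.not_adj y hy x hx hxy.symm

theorem left_ssubset (h : G.IsSeparation t s₁ s₂) : s₁ ⊂ t := by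
  obtain ⟨b, hb⟩ := h.right_nonempty
  rw [mem_sdiff] at hb
  exact (ssubset_iff_of_subset (h.union_eq ▸ subset_union_left)).2
    ⟨b, h.union_eq ▸ mem_union_right _ hb.1, hb.2⟩

theorem map {W : Type*} [DecidableEq W] (f : W ↪ V) {t s₁ s₂ : Finset W}
    (h : (G.comap f).IsSeparation t s₁ s₂) :
    G.IsSeparation (t.map f) (s₁.map f) (s₂.map f) where
  union_eq := by rw [← map_union, h.union_eq]
  left_nonempty := by rw [← Finset.map_sdiff]; exact h.left_nonempty.map
  right_nonempty := by rw [← Finset.map_sdiff]; exact h.right_nonempty.map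
  not_adj := by
    simp only [← Finset.map_sdiff, mem_map, forall_exists_index, and_imp, forall_apply_eq_imp_iff₂]
    exact h.not_adj

variable [DecidableRel G.Adj]

theorem filter_adj_subset (h : G.IsSeparation t s₁ s₂) {x : V} (hx : x ∈ s₁ \ s₂) :
    {y ∈ t | G.Adj x y} ⊆ s₁ := by
  intro y hy
  rw [mem_filter, ← h.union_eq] at hy
  by_contra hy₁
  exact h.not_adj x hx y (mem_sdiff.2 ⟨(mem_union.1 hy.1).resolve_left hy₁, hy₁⟩) hy.2

theorem card_interedges_le (h : G.IsSeparation t s₁ s₂) :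
    #(G.interedges t t) ≤ #(G.interedges s₁ s₁) + #(G.interedges s₂ s₂) := by
  refine (card_le_card fun e he => ?_).trans (card_union_le _ _)
  have := h.not_adj e.1
  have := h.not_adj e.2
  rw [mem_interedges_iff, ← h.union_eq] at he
  simp only [mem_union, mem_interedges_iff, mem_sdiff] at *
  have := G.adj_symm he.2.2
  tauto

end IsSeparation

theorem exists_isSeparation_of_not_kConnected {W : Type*} [Fintype W] [DecidableEq W]
    {H : SimpleGraph W} {k : ℕ} (hcard : k + 1 ≤ Fintype.card W) (hH : ¬ KConnected k H) :
    ∃ s₁ s₂, H.IsSeparation univ s₁ s₂ ∧ #(s₁ ∩ s₂) < k := by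
  classical
  obtain ⟨S, hS, hdisc⟩ : ∃ S : Set W, S.ncard < k ∧ ¬ (H.induce Sᶜ).Connected := by
    simpa [KConnected, Nat.card_eq_fintype_card, hcard] using hH
  have hne : Nonempty ↥Sᶜ := by
    by_contra h
    rw [Set.nonempty_coe_sort, Set.not_nonempty_iff_eq_empty, Set.compl_empty_iff] at h
    rw [h, Set.ncard_univ, Nat.card_eq_fintype_card] at hS
    omega
  obtain ⟨a, b, hab⟩ : ∃ a b : ↥Sᶜ, ¬ (H.induce Sᶜ).Reachable a b := by
    simpa [connected_iff, Preconnected, hne] using hdisc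
  set A : Finset W := {x | ∃ hx : x ∉ S, (H.induce Sᶜ).Reachable a ⟨x, hx⟩}
  refine ⟨A ∪ S.toFinset, Aᶜ, ⟨?_, ⟨a, ?_⟩, ⟨b, ?_⟩, ?_⟩, ?_⟩
  · ext x; simp only [mem_union, mem_compl, mem_univ, iff_true]; tauto
  · have haA : (a : W) ∈ A := mem_filter.2 ⟨mem_univ _, a.2, .refl _⟩
    exact mem_sdiff.2 ⟨mem_union_left _ haA, fun h => mem_compl.1 h haA⟩
  · have hbA : (b : W) ∉ A := fun h => hab (mem_filter.1 h).2.2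
    have hbS : (b : W) ∉ S := b.2
    simp [hbA, hbS]
  · simp only [mem_sdiff, mem_union, mem_compl, Set.mem_toFinset, not_or, not_not]
    rintro x ⟨-, hxA⟩ y ⟨hyA, -, hyS⟩ hxy
    obtain ⟨hxS, hax⟩ := (mem_filter.1 hxA).2
    exact hyA (mem_filter.2 ⟨mem_univ _, hyS, hax.trans (Adj.reachable (induce_adj.2 hxy))⟩)
  · calc #((A ∪ S.toFinset) ∩ Aᶜ) ≤ #S.toFinset := card_le_card (by intro x; simp; tauto)
      _ < k := by rwa [← Set.ncard_eq_toFinset_card']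

theorem exists_isSeparation_of_not_kConnected_induce {t : Finset V} {k : ℕ}
    (hcard : k + 1 ≤ #t) (h : ¬ KConnected k (G.induce (t : Set V))) :
    ∃ s₁ s₂, G.IsSeparation t s₁ s₂ ∧ #(s₁ ∩ s₂) < k := by
  have hcard' : k + 1 ≤ Fintype.card (t : Set V) := by
    rwa [← Nat.card_eq_fintype_card, Nat.card_coe_set_eq, Set.ncard_coe_finset]
  obtain ⟨s₁, s₂, hsep, hcap⟩ := exists_isSeparation_of_not_kConnected hcard' h
  set f := Function.Embedding.subtype (· ∈ (t : Set V))
  refine ⟨s₁.map f, s₂.map f, ?_, by rwa [← Finset.map_inter, card_map]⟩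
  convert hsep.map f
  ext; simp [f]

variable [DecidableRel G.Adj]

theorem card_interedges_le_erase (t : Finset V) (v : V) :
    #(G.interedges t t) ≤ #(G.interedges (t.erase v) (t.erase v)) + 2 * #{w ∈ t | G.Adj v w} := by
  have hleft : G.interedges {v} t = {v} ×ˢ {w ∈ t | G.Adj v w} := by
    ext ⟨x, y⟩; simp [mem_interedges_iff]; grind
  have hright : G.interedges t {v} = {w ∈ t | G.Adj v w} ×ˢ {v} := by
    ext ⟨x, y⟩; simp [mem_interedges_iff]; grind [adj_comm]
  calc #(G.interedges t t)
      ≤ #(G.interedges (t.erase v) (t.erase v) ∪ G.interedges {v} t ∪ G.interedges t {v}) := by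
        refine card_le_card fun e he => ?_
        simp only [mem_union, mem_interedges_iff, mem_erase, mem_singleton] at he ⊢
        tauto
    _ ≤ _ := by
        rw [hleft, hright]
        grw [card_union_le, card_union_le, card_product, card_product, card_singleton]
        omega

/- Mader's bound in Diestel's form: `#(G.interedges t t)` counts ordered adjacent pairs, i.e. twice
the number of edges of `G[t]`, so `hE` says `‖G[t]‖ > 2k(|t| - k)`. -/
theorem exists_kConnected_induce_of_card_interedges (k : ℕ) (t : Finset V) (ht : 2 * k ≤ #t)
    (hE : 4 * k * #t < #(G.interedges t t) + 4 * k ^ 2) :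
    ∃ u : Finset V, KConnected (k + 1) (G.induce (u : Set V)) := by
  induction t using Finset.strongInduction with
  | H t ih =>
  have ht_lt : 2 * k < #t := by
    refine lt_of_le_of_ne ht fun h => ?_
    have := G.card_interedges_le_mul t t
    rw [← h] at hE this
    nlinarith
  by_cases hlow : ∃ v ∈ t, #{w ∈ t | G.Adj v w} ≤ 2 * k
  · obtain ⟨v, hv, hdeg⟩ := hlow
    have herase := card_erase_add_one hv
    refine ih _ (erase_ssubset hv) (by omega) ?_
    have := G.card_interedges_le_erase t v
    rw [← herase] at hE
    nlinarith
  push Not at hlow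
  by_cases hconn : KConnected (k + 1) (G.induce (t : Set V))
  · exact ⟨t, hconn⟩
  obtain ⟨v, hv⟩ : t.Nonempty := card_pos.1 (by omega)
  have hcard : k + 1 + 1 ≤ #t := by
    have : {w ∈ t | G.Adj v w} ⊆ t.erase v := fun w hw =>
      mem_erase.2 ⟨(G.ne_of_adj (mem_filter.1 hw).2).symm, (mem_filter.1 hw).1⟩
    have := card_le_card this
    have := card_erase_add_one hv
    have := hlow v hv
    omega
  obtain ⟨s₁, s₂, hsep, hcap⟩ := G.exists_isSeparation_of_not_kConnected_induce hcard hconn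
  have hside : ∀ {s₁ s₂}, G.IsSeparation t s₁ s₂ → 2 * k ≤ #s₁ := fun hsep => by
    obtain ⟨a, ha⟩ := hsep.left_nonempty
    have hat : a ∈ t := hsep.union_eq ▸ mem_union_left _ (mem_sdiff.1 ha).1
    have := card_le_card (hsep.filter_adj_subset ha)
    have := hlow a hat
    omega
  by_cases h₁ : 4 * k * #s₁ < #(G.interedges s₁ s₁) + 4 * k ^ 2
  · exact ih s₁ hsep.left_ssubset (hside hsep) h₁
  by_cases h₂ : 4 * k * #s₂ < #(G.interedges s₂ s₂) + 4 * k ^ 2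
  · exact ih s₂ hsep.symm.left_ssubset (hside hsep.symm) h₂
  have hsum : #s₁ + #s₂ ≤ #t + k := by
    rw [← card_union_add_card_inter, hsep.union_eq]
    omega
  have := hsep.card_interedges_le
  have := Nat.mul_le_mul_left (4 * k) hsum
  nlinarith

end SimpleGraph

theorem six_mul_sq_floor_sqrt_mul_le (m n : ℕ) :
    6 * ⌊√((m : ℝ) / (6 * n))⌋₊ ^ 2 * n ≤ m := by
  rcases n.eq_zero_or_pos with rfl | hn
  · simp
  have hx : 0 ≤ (m : ℝ) / (6 * n) := by positivity
  have hsq : (⌊√((m : ℝ) / (6 * n))⌋₊ : ℝ) ^ 2 ≤ m / (6 * n) :=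
    (Real.le_sqrt (Nat.cast_nonneg _) hx).1 (Nat.floor_le (Real.sqrt_nonneg _))
  rw [le_div_iff₀ (by positivity)] at hsq
  have : ((6 * ⌊√((m : ℝ) / (6 * n))⌋₊ ^ 2 * n : ℕ) : ℝ) ≤ m := by push_cast; linarith
  exact_mod_cast this

theorem two_mul_le_and_mul_lt_of_six_mul_sq_mul_le {n m d : ℕ} (hd : 0 < d) (hn : 0 < n)
    (hm : 6 * d ^ 2 * n ≤ m) (hmn : 2 * m ≤ n * n) :
    2 * (d * (d + 1)) ≤ n ∧ 4 * (d * (d + 1)) * n < 2 * m + 4 * (d * (d + 1)) ^ 2 := by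
  have h12 : 12 * d ^ 2 ≤ n := Nat.le_of_mul_le_mul_right (by nlinarith) hn
  constructor
  · nlinarith
  · nlinarith [Nat.mul_le_mul_right n (Nat.le_self_pow two_ne_zero d)]

theorem le_grn {V : Type} [Finite V] {G : SimpleGraph V} {d : ℕ} {U : Set V}
    (hU : d + 2 ≤ U.ncard) (hG : GloballyRigid d (G.induce U)) : d ≤ grn G :=
  le_csSup ⟨Nat.card V, fun _ ⟨U', _, _, hU', _⟩ => by have := U'.ncard_le_card; omega⟩
    ⟨U, _, le_rfl, hU, hG⟩

theorem stmt15_general {V : Type} [Fintype V] (G : SimpleGraph V)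
    (hGR : ∀ (W : Type) [Fintype W] (H : SimpleGraph W) (d : ℕ), 1 ≤ d →
      KConnected (d * (d + 1) + 1) H → GloballyRigid d H) :
    ⌊Real.sqrt ((G.edgeSet.ncard : ℝ) / (6 * Fintype.card V))⌋₊ ≤ grn G := by
  classical
  rcases (Fintype.card V).eq_zero_or_pos with hn | hn
  · simp [hn]
  set d := ⌊Real.sqrt ((G.edgeSet.ncard : ℝ) / (6 * Fintype.card V))⌋₊
  rcases d.eq_zero_or_pos with hd | hd
  · simp [hd]
  have hdense : 6 * d ^ 2 * Fintype.card V ≤ #G.edgeFinset := by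
    rw [← Set.ncard_coe_finset, SimpleGraph.coe_edgeFinset]
    exact six_mul_sq_floor_sqrt_mul_le _ _
  have hpairs : 2 * #G.edgeFinset ≤ Fintype.card V * Fintype.card V := by
    rw [← G.card_interedges_univ, ← card_univ]
    exact G.card_interedges_le_mul _ _
  obtain ⟨hsize, hedges⟩ := two_mul_le_and_mul_lt_of_six_mul_sq_mul_le hd hn hdense hpairs
  obtain ⟨u, hu⟩ := G.exists_kConnected_induce_of_card_interedges (d * (d + 1)) univ
    (by rwa [card_univ]) (by rwa [card_univ, G.card_interedges_univ])
  have hu_card : d * (d + 1) + 1 + 1 ≤ (u : Set V).ncard := Nat.card_coe_set_eq _ ▸ hu.1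
  exact le_grn (by nlinarith) (hGR _ _ d hd hu)

/-- Assuming the Lovász–Yemini conjecture (every `d(d+1)`-connected
graph is rigid in `ℝ^d`) and its global-rigidity consequence (every
`(d(d+1)+1)`-connected graph is globally rigid in `ℝ^d`), every graph `G` satisfies
`grn G ≥ ⌊√(|E| / (6|V|))⌋`. -/
theorem stmt15 {V : Type} [Fintype V] (G : SimpleGraph V)
    (hLY : ∀ (W : Type) [Fintype W] (H : SimpleGraph W) (d : ℕ), 1 ≤ d →
      KConnected (d * (d + 1)) H → Rigid d H)
    (hGR : ∀ (W : Type) [Fintype W] (H : SimpleGraph W) (d : ℕ), 1 ≤ d →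
      KConnected (d * (d + 1) + 1) H → GloballyRigid d H) :
    ⌊Real.sqrt ((G.edgeSet.ncard : ℝ) / (6 * Fintype.card V))⌋₊ ≤ grn G :=
  stmt15_general G hGR
end
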